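/- If ℓ ≡ 2 (mod 3) is prime and a is a non-negative integer with ord_ℓ(3a+1) = 1, then the number of 3-core partitions of ℓ²n + a is zero for every non-negative integer n. Equivalently, the coefficient c₃(ℓ²n+a) of q^{ℓ²n+a} in ∏_{n≥1}(1-q^{3n})³/(1-q^n) vanishes. -/

import Mathlib

/-- The hook length of the cell in row `i`, column `j` of a Young diagram. -/
def YoungDiagram.hookLength (μ : YoungDiagram) (i j : ℕ) : ℕ :=
  (μ.rowLen i - j) + (μ.colLen j - i) - 1

/-- The number of cells of `μ` whose hook length is divisible by `t`. -/
def hookCount (t : ℕ) (μ : YoungDiagram) : ℕ :=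
  (μ.cells.filter (fun c => t ∣ μ.hookLength c.1 c.2)).card

/-- The Young diagram attached to a partition of `n`. -/
def Nat.Partition.toYoung {n : ℕ} (p : n.Partition) : YoungDiagram :=
  YoungDiagram.ofRowLens (p.parts.sort (· ≥ ·)) (List.sortedGE_iff_pairwise.mpr (p.parts.pairwise_sort _))

/-- `p_t(a,b;n)`: the number of partitions `λ ⊢ n` with `#𝓗_t(λ) ≡ a (mod b)`. -/
def hookP (t a b n : ℕ) : ℕ :=
  Fintype.card {p : n.Partition // hookCount t p.toYoung % b = a % b}

/-!
Let `B` be the set of first-column hook lengths of a Young diagram `μ` with `k` rows (its β-set):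
`#B = k`, `∑ B = |μ| + k(k-1)/2`, and whenever `b ∈ B` and `b - h ∉ B`, some cell of `μ` has hook
length `h`. For a 3-core, `B` therefore avoids multiples of 3 and is closed under `b ↦ b - 3`, so
`B = {1, 4, …, 3m₁ - 2} ∪ {2, 5, …, 3m₂ - 1}` and `3|μ| + 1 = x² + xy + y²` with `x = m₂ - 2m₁`,
`y = m₁ + m₂ + 1`. A prime `ℓ ≡ 2 (mod 3)` dividing `x² + xy + y²` divides both `x` and `y`,
because `ZMod ℓ` has no primitive cube root of unity. So a 3-core of size `ℓ²n + a` would give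
`ℓ² ∣ 3(ℓ²n + a) + 1`, hence `ℓ² ∣ 3a + 1`.
-/

open Finset

theorem ZMod.eq_zero_of_sq_add_mul_add_sq_eq_zero {p : ℕ} [Fact p.Prime] (hp3 : p % 3 = 2)
    {u v : ZMod p} (h : u ^ 2 + u * v + v ^ 2 = 0) : u = 0 ∧ v = 0 := by
  have hv : v = 0 := by
    by_contra hv
    set t := u * v⁻¹
    have htv : t * v = u := by simp [t, hv]
    have ht : t ^ 2 + t + 1 = 0 := by
      have : (t ^ 2 + t + 1) * v ^ 2 = 0 := by linear_combination h + (t * v + u + v) * htv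
      simpa [hv] using this
    have ht0 : t ≠ 0 := by
      intro h0
      simp [h0] at ht
    -- `t` is a cube root of unity, and `3 ∤ p - 1`, so `t = 1`.
    have hord : orderOf t ∣ Nat.gcd 3 (p - 1) :=
      Nat.dvd_gcd (orderOf_dvd_of_pow_eq_one (by linear_combination (t - 1) * ht))
        (ZMod.orderOf_dvd_card_sub_one ht0)
    rw [Nat.gcd_rec, show (p - 1) % 3 = 1 by omega, Nat.gcd_one_left, Nat.dvd_one,
      orderOf_eq_one_iff] at hord
    have h3 : ((3 : ℕ) : ZMod p) = 0 := by
      rw [hord] at ht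
      push_cast
      linear_combination ht
    have := (Nat.prime_dvd_prime_iff_eq Fact.out Nat.prime_three).1
      ((ZMod.natCast_eq_zero_iff 3 p).1 h3)
    omega
  subst hv
  exact ⟨pow_eq_zero_iff two_ne_zero |>.1 (by simpa using h), rfl⟩

theorem Int.sq_dvd_of_dvd_sq_add_mul_add_sq {p : ℕ} (hp : p.Prime) (hp3 : p % 3 = 2) {x y : ℤ}
    (h : (p : ℤ) ∣ x ^ 2 + x * y + y ^ 2) : (p : ℤ) ^ 2 ∣ x ^ 2 + x * y + y ^ 2 := by
  have := Fact.mk hp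
  have hxy := ZMod.eq_zero_of_sq_add_mul_add_sq_eq_zero hp3 (u := x) (v := y) (by
    exact_mod_cast (ZMod.intCast_zmod_eq_zero_iff_dvd _ p).2 h)
  obtain ⟨u, rfl⟩ := (ZMod.intCast_zmod_eq_zero_iff_dvd x p).1 hxy.1
  obtain ⟨v, rfl⟩ := (ZMod.intCast_zmod_eq_zero_iff_dvd y p).1 hxy.2
  exact ⟨u ^ 2 + u * v + v ^ 2, by ring⟩

theorem Finset.sum_range_id_mul_two_add (n : ℕ) : (∑ i ∈ range n, i) * 2 + n = n * n := by
  rw [sum_range_id_mul_two]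
  rcases n with _ | n
  · rfl
  · simp only [Nat.add_sub_cancel]
    ring

theorem Finset.eq_range_card_of_isLowerSet {s : Finset ℕ} (hs : IsLowerSet (s : Set ℕ)) :
    s = range #s := by
  refine eq_of_subset_of_card_le (fun x hx => mem_range.2 ?_) (by simp)
  have : range (x + 1) ⊆ s := fun y hy => hs (Nat.lt_succ_iff.1 (mem_range.1 hy)) hx
  simpa using card_le_card this

theorem Finset.sub_mul_mem_of_sub_mem {s : Finset ℕ} {t : ℕ} (hs : ∀ b ∈ s, t ≤ b → b - t ∈ s)
    {b : ℕ} (hb : b ∈ s) {c : ℕ} (hc : t * c ≤ b) : b - t * c ∈ s := by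
  induction c with
  | zero => simpa using hb
  | succ c ih =>
    have := hs _ (ih ((Nat.mul_le_mul_left t c.le_succ).trans hc)) (by rw [mul_add] at hc; omega)
    rwa [mul_add, mul_one, ← Nat.sub_sub]

theorem Finset.exists_filter_mod_eq_image_range {s : Finset ℕ} {t : ℕ}
    (hs : ∀ b ∈ s, t ≤ b → b - t ∈ s) {r : ℕ} (hr : r < t) :
    ∃ m, s.filter (· % t = r) = (range m).image (t * · + r) := by
  classical
  have hinj : Function.Injective (t * · + r) := fun x y hxy =>
    (by simpa using hxy : x = y ∨ t = 0).resolve_right (by omega)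
  set e := s.preimage (t * · + r) hinj.injOn
  have he : IsLowerSet (e : Set ℕ) := fun x y hyx hx => by
    simp only [coe_preimage, Set.mem_preimage, mem_coe, e] at hx ⊢
    have hle : t * (x - y) ≤ t * x + r :=
      (Nat.mul_le_mul_left t (Nat.sub_le x y)).trans (Nat.le_add_right _ _)
    have heq : t * x + r - t * (x - y) = t * y + r := by
      have := Nat.mul_le_mul_left t hyx
      rw [Nat.mul_sub]
      omega
    exact heq ▸ sub_mul_mem_of_sub_mem hs hx hle
  refine ⟨#e, ?_⟩
  rw [← eq_range_card_of_isLowerSet he, image_preimage]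
  refine filter_congr fun b _ => ⟨fun hb => ⟨b / t, by rw [← hb]; exact Nat.div_add_mod b t⟩, ?_⟩
  rintro ⟨j, rfl⟩
  simp [Nat.mod_eq_of_lt hr]

namespace YoungDiagram

variable (μ : YoungDiagram)

def firstColumnHooks : Finset ℕ :=
  (range (μ.colLen 0)).image (μ.hookLength · 0)

variable {μ}

theorem rowLen_pos_iff {i : ℕ} : 0 < μ.rowLen i ↔ i < μ.colLen 0 := by
  rw [← mem_iff_lt_rowLen, mem_iff_lt_colLen]

theorem hookLength_zero_add {i : ℕ} (hi : i < μ.colLen 0) :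
    μ.hookLength i 0 + i + 1 = μ.rowLen i + μ.colLen 0 := by
  have := rowLen_pos_iff.2 hi
  unfold hookLength
  omega

theorem hookLength_zero_add_sub_le {i₁ i₂ : ℕ} (h : i₁ ≤ i₂) (h₂ : i₂ < μ.colLen 0) :
    μ.hookLength i₂ 0 + (i₂ - i₁) ≤ μ.hookLength i₁ 0 := by
  have := μ.rowLen_anti i₁ i₂ h
  have := hookLength_zero_add h₂
  have := hookLength_zero_add (h.trans_lt h₂)
  omega

theorem injOn_hookLength_zero : Set.InjOn (μ.hookLength · 0) (range (μ.colLen 0)) := by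
  intro i₁ hi₁ i₂ hi₂ h
  simp only [coe_range, Set.mem_Iio] at hi₁ hi₂
  rcases le_total i₁ i₂ with h₁₂ | h₂₁
  · have := hookLength_zero_add_sub_le h₁₂ hi₂; simp only at h; omega
  · have := hookLength_zero_add_sub_le h₂₁ hi₁; simp only at h; omega

theorem card_firstColumnHooks : #μ.firstColumnHooks = μ.colLen 0 := by
  rw [firstColumnHooks, card_image_of_injOn injOn_hookLength_zero, card_range]

theorem sum_range_rowLen : ∑ i ∈ range (μ.colLen 0), μ.rowLen i = μ.rowLens.sum := by
  rw [rowLens, ← List.sum_toFinset _ List.nodup_range, List.toFinset_range]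

theorem sum_firstColumnHooks :
    ∑ b ∈ μ.firstColumnHooks, b = μ.rowLens.sum + ∑ i ∈ range (μ.colLen 0), i := by
  have hreflect := sum_range_reflect (fun i => i) (μ.colLen 0)
  rw [← sum_range_rowLen, firstColumnHooks, sum_image injOn_hookLength_zero, ← hreflect,
    ← sum_add_distrib]
  refine sum_congr rfl fun i hi => ?_
  rw [mem_range] at hi
  have := hookLength_zero_add hi
  omega

theorem exists_hookLength_eq_of_add_mem {m h : ℕ} (hmh : m + h ∈ μ.firstColumnHooks)
    (hm : m ∉ μ.firstColumnHooks) : ∃ c ∈ μ, μ.hookLength c.1 c.2 = h := by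
  classical
  obtain ⟨i₀, hi₀, hi₀m⟩ := mem_image.1 hmh
  rw [mem_range] at hi₀
  have hne : ∀ i < μ.colLen 0, μ.hookLength i 0 ≠ m := fun i hi he =>
    hm (mem_image.2 ⟨i, mem_range.2 hi, he⟩)
  -- the rows `i < s` are those whose first-column hook exceeds `m`
  obtain ⟨s, hsk, hlt, hgt⟩ : ∃ s ≤ μ.colLen 0, (∀ i < s, m < μ.hookLength i 0) ∧
      (s < μ.colLen 0 → μ.hookLength s 0 < m) := by
    have hex : ∃ s, s = μ.colLen 0 ∨ μ.hookLength s 0 < m := ⟨_, Or.inl rfl⟩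
    have hle : Nat.find hex ≤ μ.colLen 0 := Nat.find_le (Or.inl rfl)
    refine ⟨Nat.find hex, hle, fun i hi => ?_, fun hs =>
      (Nat.find_spec hex).resolve_left hs.ne⟩
    have := Nat.find_min hex hi
    have := hne i (by omega)
    omega
  have hi₀s : i₀ < s := by
    by_contra! h
    have := hookLength_zero_add_sub_le h hi₀
    have := hgt (by omega)
    omega
  have hks : μ.colLen 0 ≤ m + s := by
    rcases hsk.lt_or_eq with hs | hs
    · have := hookLength_zero_add_sub_le (Nat.le_sub_one_of_lt hs) (Nat.sub_one_lt_of_lt hs)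
      have := rowLen_pos_iff.2 (Nat.sub_one_lt_of_lt hs)
      have := hookLength_zero_add (Nat.sub_one_lt_of_lt hs)
      have := hgt hs
      omega
    · omega
  have hmem : (s - 1, m + s - μ.colLen 0) ∈ μ := by
    have := hlt (s - 1) (by omega)
    have := hookLength_zero_add (μ := μ) (i := s - 1) (by omega)
    rw [mem_iff_lt_rowLen]
    omega
  have hnotMem : (s, m + s - μ.colLen 0) ∉ μ := by
    rw [mem_iff_lt_rowLen, not_lt]
    rcases hsk.lt_or_eq with hs | hs
    · have := hookLength_zero_add hs
      have := hgt hs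
      omega
    · have := (rowLen_pos_iff (μ := μ) (i := s)).not.2 (by omega)
      omega
  have hcol : μ.colLen (m + s - μ.colLen 0) = s := by
    rw [mem_iff_lt_colLen] at hmem hnotMem
    omega
  -- column `j = m + s - colLen 0` has `s` cells, so `(i₀, j)` has hook `hookLength i₀ 0 - m`
  have hcell : (i₀, m + s - μ.colLen 0) ∈ μ := μ.up_left_mem (by omega) le_rfl hmem
  refine ⟨_, hcell, ?_⟩
  rw [mem_iff_lt_rowLen] at hcell
  have := hookLength_zero_add hi₀
  change μ.rowLen i₀ - _ + (μ.colLen _ - i₀) - 1 = h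
  rw [hcol]
  omega

theorem not_dvd_hookLength_of_hookCount_eq_zero {t : ℕ} (ht : hookCount t μ = 0) {c : ℕ × ℕ}
    (hc : c ∈ μ) : ¬ t ∣ μ.hookLength c.1 c.2 :=
  filter_eq_empty_iff.1 (card_eq_zero.1 ht) ((mem_cells c).2 hc)

theorem not_dvd_of_mem_firstColumnHooks {t : ℕ} (ht : hookCount t μ = 0) {b : ℕ}
    (hb : b ∈ μ.firstColumnHooks) : ¬ t ∣ b := by
  obtain ⟨i, hi, rfl⟩ := mem_image.1 hb
  exact not_dvd_hookLength_of_hookCount_eq_zero ht (mem_iff_lt_colLen.2 (mem_range.1 hi))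

theorem sub_mem_firstColumnHooks {t : ℕ} (ht : hookCount t μ = 0) {b : ℕ}
    (hb : b ∈ μ.firstColumnHooks) (htb : t ≤ b) : b - t ∈ μ.firstColumnHooks := by
  by_contra hbt
  obtain ⟨c, hc, hct⟩ := exists_hookLength_eq_of_add_mem (by rwa [Nat.sub_add_cancel htb]) hbt
  exact not_dvd_hookLength_of_hookCount_eq_zero ht hc (hct ▸ dvd_rfl)

theorem exists_sq_add_mul_add_sq_eq_of_hookCount_three_eq_zero (h : hookCount 3 μ = 0) :
    ∃ x y : ℤ, x ^ 2 + x * y + y ^ 2 = 3 * μ.rowLens.sum + 1 := by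
  classical
  have hsub : ∀ b ∈ μ.firstColumnHooks, 3 ≤ b → b - 3 ∈ μ.firstColumnHooks := fun _ hb =>
    sub_mem_firstColumnHooks h hb
  obtain ⟨m₁, hm₁⟩ := exists_filter_mod_eq_image_range hsub (r := 1) (by norm_num)
  obtain ⟨m₂, hm₂⟩ := exists_filter_mod_eq_image_range hsub (r := 2) (by norm_num)
  have hB₂ : μ.firstColumnHooks.filter (¬ · % 3 = 1) = μ.firstColumnHooks.filter (· % 3 = 2) :=
    filter_congr fun b hb => by
      have := not_dvd_of_mem_firstColumnHooks h hb
      omega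
  have hinj (r : ℕ) : Function.Injective (3 * · + r) := fun x y hxy => by
    simp only at hxy; omega
  have hcard : m₁ + m₂ = μ.colLen 0 := by
    rw [← card_firstColumnHooks, ← card_filter_add_card_filter_not (· % 3 = 1), hB₂, hm₁, hm₂,
      card_image_of_injective _ (hinj 1), card_image_of_injective _ (hinj 2), card_range,
      card_range]
  have hsum : ∑ j ∈ range m₁, (3 * j + 1) + ∑ j ∈ range m₂, (3 * j + 2) =
      μ.rowLens.sum + ∑ i ∈ range (m₁ + m₂), i := by
    rw [hcard, ← sum_firstColumnHooks,
      ← sum_filter_add_sum_filter_not (s := μ.firstColumnHooks) (p := (· % 3 = 1)), hB₂, hm₁, hm₂,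
      sum_image (hinj 1).injOn, sum_image (hinj 2).injOn]
  rw [sum_add_distrib, sum_add_distrib, ← mul_sum, ← mul_sum] at hsum
  simp only [sum_const, card_range, smul_eq_mul] at hsum
  have h₀ := sum_range_id_mul_two_add (m₁ + m₂)
  have h₁ := sum_range_id_mul_two_add m₁
  have h₂ := sum_range_id_mul_two_add m₂
  refine ⟨m₂ - 2 * m₁, m₁ + m₂ + 1, ?_⟩
  generalize μ.rowLens.sum = N at hsum ⊢
  zify at hsum h₀ h₁ h₂
  linarith

end YoungDiagram

theorem Nat.Partition.sum_rowLens_toYoung {n : ℕ} (p : n.Partition) :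
    p.toYoung.rowLens.sum = n := by
  rw [toYoung, YoungDiagram.rowLens_ofRowLens_eq_self, ← Multiset.sum_coe, Multiset.sort_eq,
    p.parts_sum]
  exact fun x hx => p.parts_pos ((Multiset.mem_sort _).1 hx)

theorem three_core_vanishing (ℓ : ℕ) (hp : ℓ.Prime) (h2 : ℓ % 3 = 2) (a : ℕ)
    (hdvd : ℓ ∣ 3 * a + 1) (hndvd : ¬ ℓ ^ 2 ∣ 3 * a + 1) (n : ℕ) :
    Fintype.card {p : (ℓ ^ 2 * n + a).Partition // hookCount 3 p.toYoung = 0} = 0 := by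
  rw [Fintype.card_eq_zero_iff]
  refine ⟨fun ⟨p, hp₀⟩ => hndvd ?_⟩
  obtain ⟨x, y, hxy⟩ := p.toYoung.exists_sq_add_mul_add_sq_eq_of_hookCount_three_eq_zero hp₀
  rw [p.sum_rowLens_toYoung] at hxy
  have hsplit : 3 * ((ℓ ^ 2 * n + a : ℕ) : ℤ) + 1 = ℓ ^ 2 * (3 * n) + (3 * a + 1 : ℕ) := by
    push_cast; ring
  have hℓ : (ℓ : ℤ) ∣ x ^ 2 + x * y + y ^ 2 := by
    rw [hxy, hsplit]
    exact dvd_add ((dvd_pow_self _ two_ne_zero).mul_right _) (Int.natCast_dvd_natCast.2 hdvd)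
  have hℓ₂ := Int.sq_dvd_of_dvd_sq_add_mul_add_sq hp h2 hℓ
  rw [hxy, hsplit, dvd_add_right (dvd_mul_right _ _)] at hℓ₂
  exact_mod_cast hℓ₂
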